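/- Let A be a finite-dimensional ℤ/2ℤ-graded associative algebra over a field of characteristic zero with an odd invariant scalar product g, and let (e_μ), (e^μ) be homogeneous dual bases with g(e^μ, e_ν) = δ^μ_ν. Then for all homogeneous a, b ∈ A: Σ_μ (−1)^{|e^μ|(|a|+|b|+1)} e^μ·a·b·e_μ = (−1)^{|a||b|} Σ_μ (−1)^{|e^μ|(|a|+|b|+1)} e^μ·b·a·e_μ. -/

import Mathlib

/-- A finite-dimensional ℤ/2ℤ-graded associative algebra `A = A₀ ⊕ A₁` (possibly
non-unital) with an odd invariant scalar product `g`: `g` is non-degenerate, vanishes on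
`A₀ × A₀` and `A₁ × A₁`, is invariant (`g(ab,c) = g(a,bc)`) and supersymmetric (which,
given the vanishing on equal parities, amounts to plain symmetry). -/
structure OddFrob (k A : Type*) [Field k] [NonUnitalRing A] [Module k A]
    [SMulCommClass k A A] [IsScalarTower k A A] where
  A0 : Submodule k A
  A1 : Submodule k A
  compl : IsCompl A0 A1
  mul00 : ∀ x ∈ A0, ∀ y ∈ A0, x * y ∈ A0
  mul01 : ∀ x ∈ A0, ∀ y ∈ A1, x * y ∈ A1
  mul10 : ∀ x ∈ A1, ∀ y ∈ A0, x * y ∈ A1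
  mul11 : ∀ x ∈ A1, ∀ y ∈ A1, x * y ∈ A0
  g : A →ₗ[k] A →ₗ[k] k
  nondeg : ∀ x, (∀ y, g x y = 0) → x = 0
  zero00 : ∀ x ∈ A0, ∀ y ∈ A0, g x y = 0
  zero11 : ∀ x ∈ A1, ∀ y ∈ A1, g x y = 0
  invar : ∀ x y z, g (x * y) z = g x (y * z)
  symm : ∀ x y, g x y = g y x

variable {k A : Type*} [Field k] [NonUnitalRing A] [Module k A]
  [SMulCommClass k A A] [IsScalarTower k A A]

/-- `a` is homogeneous of parity `p` (mod 2). -/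
def OddFrob.Homog (S : OddFrob k A) (p : ℕ) (a : A) : Prop :=
  if p % 2 = 0 then a ∈ S.A0 else a ∈ S.A1

/-- Homogeneous dual bases `(e_μ)`, `(e^μ)` of `A`: `e^μ = f μ` is homogeneous of parity
`q μ`, `e_μ = e μ` of the opposite parity, and `g(e^μ, e_ν) = δ^μ_ν`. -/
def OddFrob.DualBases (S : OddFrob k A) {ι : Type*} [Fintype ι] [DecidableEq ι]
    (e : Module.Basis ι k A) (f : ι → A) (q : ι → ℕ) : Prop :=
  (∀ μ, S.Homog (q μ) (f μ)) ∧ (∀ μ, S.Homog (q μ + 1) (e μ)) ∧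
  (∀ μ ν, S.g (f μ) (e ν) = if μ = ν then 1 else 0)

/-
With `ε = (-1)^(|a|+|b|+1)`, let `σ = S.scaleEven ε` act by `ε` on `A₀` and trivially on `A₁`,
so that `σ e_μ = ε^{|e^μ|} e_μ`. Since `(e_μ)`, `(e^μ)` are dual for `g`, pairing either side of
the identity with an arbitrary `y` and using invariance of `g` turns the sum into the trace of
`x ↦ u (v (σ x · y))` with `(u, v) = (a, b)` resp. `(b, a)`. Moving `L_a` around the trace costs
the sign `ε^{|a|}` from commuting it past `σ`, and `ε^{|a|} = (-1)^{|a||b|}`.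
-/

theorem Module.Basis.repr_apply_eq_of_dual {R M ι : Type*} [CommRing R] [AddCommGroup M]
    [Module R M] [Fintype ι] [DecidableEq ι] (b : Module.Basis ι R M)
    (B : M →ₗ[R] M →ₗ[R] R) (f : ι → M) (hB : ∀ μ ν, B (f μ) (b ν) = if μ = ν then 1 else 0)
    (x : M) (μ : ι) : b.repr x μ = B (f μ) x := by
  conv_rhs => rw [← b.sum_repr x]
  rw [map_sum]
  simp [hB]

theorem LinearMap.trace_eq_sum_of_dual {R M ι : Type*} [CommRing R] [AddCommGroup M]
    [Module R M] [Fintype ι] [DecidableEq ι] (b : Module.Basis ι R M)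
    (B : M →ₗ[R] M →ₗ[R] R) (f : ι → M) (hB : ∀ μ ν, B (f μ) (b ν) = if μ = ν then 1 else 0)
    (F : M →ₗ[R] M) : LinearMap.trace R M F = ∑ μ, B (f μ) (F (b μ)) := by
  rw [LinearMap.trace_eq_matrix_trace R b, Matrix.trace]
  simp only [Matrix.diag_apply, LinearMap.toMatrix_apply, b.repr_apply_eq_of_dual B f hB]

namespace OddFrob

variable (S : OddFrob k A) {ε : k} {p : ℕ} {x : A}

theorem homog_iff : S.Homog p x ↔ p % 2 = 0 ∧ x ∈ S.A0 ∨ p % 2 = 1 ∧ x ∈ S.A1 := by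
  rcases Nat.mod_two_eq_zero_or_one p with hp | hp <;> simp [Homog, hp]

theorem eq_of_forall_g_eq {x x' : A} (h : ∀ y, S.g x y = S.g x' y) : x = x' :=
  sub_eq_zero.1 <| S.nondeg _ fun y => by simp [h]

noncomputable def scaleEven (ε : k) : A →ₗ[k] A :=
  LinearMap.ofIsCompl S.compl (ε • S.A0.subtype) S.A1.subtype

theorem scaleEven_of_mem_A0 (hx : x ∈ S.A0) : S.scaleEven ε x = ε • x :=
  LinearMap.ofIsCompl_apply_left S.compl (⟨x, hx⟩ : S.A0)

theorem scaleEven_of_mem_A1 (hx : x ∈ S.A1) : S.scaleEven ε x = x :=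
  LinearMap.ofIsCompl_apply_right S.compl (⟨x, hx⟩ : S.A1)

theorem scaleEven_of_homog_succ (hε : ε ^ 2 = 1) (hx : S.Homog (p + 1) x) :
    S.scaleEven ε x = ε ^ p • x := by
  rw [pow_eq_pow_mod p hε]
  rcases S.homog_iff.1 hx with ⟨hp, hx⟩ | ⟨hp, hx⟩
  · rw [S.scaleEven_of_mem_A0 hx, show p % 2 = 1 by omega, pow_one]
  · rw [S.scaleEven_of_mem_A1 hx, show p % 2 = 0 by omega, pow_zero, one_smul]

theorem scaleEven_mul_of_homog (hε : ε ^ 2 = 1) {a : A} (ha : S.Homog p a) (x : A) :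
    S.scaleEven ε (a * x) = ε ^ p • (a * S.scaleEven ε x) := by
  obtain ⟨x₀, x₁, hx₀, hx₁, rfl⟩ :=
    Submodule.codisjoint_iff_exists_add_eq.1 S.compl.codisjoint x
  rw [pow_eq_pow_mod p hε]
  rcases S.homog_iff.1 ha with ⟨hp, ha⟩ | ⟨hp, ha⟩ <;> rw [hp]
  · simp [mul_add, S.scaleEven_of_mem_A0 hx₀, S.scaleEven_of_mem_A1 hx₁,
      S.scaleEven_of_mem_A0 (S.mul00 a ha x₀ hx₀), S.scaleEven_of_mem_A1 (S.mul01 a ha x₁ hx₁),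
      mul_smul_comm]
  · simp [mul_add, S.scaleEven_of_mem_A0 hx₀, S.scaleEven_of_mem_A1 hx₁,
      S.scaleEven_of_mem_A1 (S.mul10 a ha x₀ hx₀), S.scaleEven_of_mem_A0 (S.mul11 a ha x₁ hx₁),
      mul_smul_comm, smul_smul, ← sq, hε]

theorem g_sum_eq_trace {ι : Type*} [Fintype ι] [DecidableEq ι] {e : Module.Basis ι k A}
    {f : ι → A} {q : ι → ℕ} (hdb : S.DualBases e f q) (hε : ε ^ 2 = 1) (u v y : A) :
    S.g (∑ μ, ε ^ q μ • (f μ * u * v * e μ)) y =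
      LinearMap.trace k A (LinearMap.mulLeft k u * LinearMap.mulLeft k v *
        LinearMap.mulRight k y * S.scaleEven ε) := by
  rw [LinearMap.trace_eq_sum_of_dual e S.g f hdb.2.2, map_sum, LinearMap.sum_apply]
  refine Finset.sum_congr rfl fun μ _ => ?_
  simp [S.invar, S.scaleEven_of_homog_succ hε (hdb.2.1 μ), mul_assoc]

theorem trace_mulLeft_swap (hε : ε ^ 2 = 1) {a : A} (ha : S.Homog p a) (b y : A) :
    LinearMap.trace k A (LinearMap.mulLeft k a * LinearMap.mulLeft k b *
        LinearMap.mulRight k y * S.scaleEven ε) =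
      ε ^ p * LinearMap.trace k A (LinearMap.mulLeft k b * LinearMap.mulLeft k a *
        LinearMap.mulRight k y * S.scaleEven ε) := by
  have hσ : S.scaleEven ε * LinearMap.mulLeft k a =
      ε ^ p • (LinearMap.mulLeft k a * S.scaleEven ε) :=
    LinearMap.ext (S.scaleEven_mul_of_homog hε ha)
  have hy : LinearMap.mulRight k y * LinearMap.mulLeft k a =
      LinearMap.mulLeft k a * LinearMap.mulRight k y :=
    (LinearMap.commute_mulLeft_right a y).symm.eq
  calc _ = LinearMap.trace k A (LinearMap.mulLeft k b * LinearMap.mulRight k y *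
        (S.scaleEven ε * LinearMap.mulLeft k a)) := by
          rw [mul_assoc, mul_assoc, LinearMap.trace_mul_comm]
          simp only [mul_assoc]
    _ = _ := by
          rw [hσ, mul_smul_comm, map_smul, smul_eq_mul, ← mul_assoc,
            mul_assoc _ _ (LinearMap.mulLeft k a), hy]
          simp only [mul_assoc]

end OddFrob

theorem dual_bases_swap_identity_general
    {k A : Type*} [Field k] [NonUnitalRing A] [Module k A]
    [SMulCommClass k A A] [IsScalarTower k A A]
    (S : OddFrob k A) {ι : Type*} [Fintype ι] [DecidableEq ι]
    (e : Module.Basis ι k A) (f : ι → A) (q : ι → ℕ) (hdb : S.DualBases e f q)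
    (pa pb : ℕ) (a b : A) (ha : S.Homog pa a) :
    ∑ μ, (-1 : k) ^ (q μ * (pa + pb + 1)) • (f μ * a * b * e μ) =
      (-1 : k) ^ (pa * pb) •
        ∑ μ, (-1 : k) ^ (q μ * (pa + pb + 1)) • (f μ * b * a * e μ) := by
  set ε : k := (-1) ^ (pa + pb + 1) with hε_def
  have hε : ε ^ 2 = 1 := by rw [← pow_mul, mul_comm, pow_mul, neg_one_sq, one_pow]
  have hsign : (-1 : k) ^ (pa * pb) = ε ^ pa := by
    rw [← pow_mul, show (pa + pb + 1) * pa = pa * pb + pa * (pa + 1) by ring, pow_add,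
      (Nat.even_mul_succ_self pa).neg_one_pow, mul_one]
  rw [hsign]
  simp only [mul_comm (q _), pow_mul, ← hε_def]
  refine S.eq_of_forall_g_eq fun y => ?_
  rw [map_smul, LinearMap.smul_apply, S.g_sum_eq_trace hdb hε, S.g_sum_eq_trace hdb hε,
    S.trace_mulLeft_swap hε ha, smul_eq_mul]

/-- For homogeneous dual bases and homogeneous `a, b`:
`Σ_μ (−1)^{|e^μ|(|a|+|b|+1)} e^μ·a·b·e_μ = (−1)^{|a||b|} Σ_μ (−1)^{|e^μ|(|a|+|b|+1)} e^μ·b·a·e_μ`. -/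
theorem dual_bases_swap_identity
    {k A : Type*} [Field k] [CharZero k] [NonUnitalRing A] [Module k A]
    [SMulCommClass k A A] [IsScalarTower k A A] [FiniteDimensional k A]
    (S : OddFrob k A) {ι : Type*} [Fintype ι] [DecidableEq ι]
    (e : Module.Basis ι k A) (f : ι → A) (q : ι → ℕ) (hdb : S.DualBases e f q)
    (pa pb : ℕ) (a b : A) (ha : S.Homog pa a) (hb : S.Homog pb b) :
    ∑ μ, (-1 : k) ^ (q μ * (pa + pb + 1)) • (f μ * a * b * e μ) =
      (-1 : k) ^ (pa * pb) •
        ∑ μ, (-1 : k) ^ (q μ * (pa + pb + 1)) • (f μ * b * a * e μ) :=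
  dual_bases_swap_identity_general S e f q hdb pa pb a b ha
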